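/- Let γ be a gauge on ℝ^d (d ≥ 2). If Birkhoff orthogonality with respect to γ is left additive (for all x, y, z: x ⊥_B z and y ⊥_B z imply (x+y) ⊥_B z), then γ is a norm, i.e., γ(−x) = γ(x) for all x. -/

import Mathlib

open scoped RealInnerProductSpace

noncomputable section

variable {d : ℕ}

/-- A gauge on ℝ^d: nonnegative, vanishing only at 0, positively homogeneous, subadditive. -/
def IsGauge (γ : EuclideanSpace ℝ (Fin d) → ℝ) : Prop :=
  (∀ x, 0 ≤ γ x) ∧ (∀ x, γ x = 0 → x = 0) ∧
  (∀ (x : EuclideanSpace ℝ (Fin d)) (l : ℝ), 0 < l → γ (l • x) = l * γ x) ∧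
  (∀ x y, γ (x + y) ≤ γ x + γ y)

/-- The polar function of a gauge. -/
def polarGauge (γ : EuclideanSpace ℝ (Fin d) → ℝ) : EuclideanSpace ℝ (Fin d) → ℝ :=
  fun xs => sInf {l : ℝ | 0 < l ∧ ∀ x, ⟪xs, x⟫ ≤ l * γ x}

/-- The ε-subdifferential of f at x. -/
def epsSubdiff (f : EuclideanSpace ℝ (Fin d) → ℝ) (ε : ℝ) (x : EuclideanSpace ℝ (Fin d)) :
    Set (EuclideanSpace ℝ (Fin d)) :=
  {xs | ∀ y, ⟪xs, y - x⟫ ≤ f y - f x + ε}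

/-- ε-Birkhoff orthogonality: x ⊥_B^ε y iff γ x ≤ γ (x + λ y) + ε for all λ. -/
def BirkhoffEps (γ : EuclideanSpace ℝ (Fin d) → ℝ) (ε : ℝ)
    (x y : EuclideanSpace ℝ (Fin d)) : Prop :=
  ∀ l : ℝ, γ x ≤ γ (x + l • y) + ε

/-- The ε-directional derivative of f at x in direction y. -/
def epsDirDeriv (f : EuclideanSpace ℝ (Fin d) → ℝ) (ε : ℝ)
    (x y : EuclideanSpace ℝ (Fin d)) : ℝ :=
  sInf {q : ℝ | ∃ l : ℝ, 0 < l ∧ q = (f (x + l • y) - f x + ε) / l}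

/-
Left additivity makes Birkhoff orthogonality invariant under `x ↦ -x`: if `x ⊥ z`, a minimiser
`y = -x + t • z` of `γ` on the line `-x + ℝ z` satisfies `y ⊥ z`, so `t • z = x + y ⊥ z`, which
forces `t = 0`. Reading `u ⊥ z` off the one-sided directional derivatives
`D(u; ·) = epsDirDeriv γ 0 u` of `γ` (`u ⊥ z ↔ 0 ≤ D(u; z) ∧ 0 ≤ D(u; -z)`), this
symmetry gives `γ (-u) * D(u; w) = γ u * D(-u; -w)` for independent `u, w`. Hence along the
segment from `x` to `w` the ratio `γ p / γ (-p)` has vanishing right derivative, so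
`γ x / γ (-x) = γ w / γ (-w)`; applied to the pairs `(x, w)` and `(w, -x)` this yields
`γ (-x) = γ x`.
-/

open Set Filter Topology

def BirkhoffLeftAdditive (γ : EuclideanSpace ℝ (Fin d) → ℝ) : Prop :=
  ∀ x y z, BirkhoffEps γ 0 x z → BirkhoffEps γ 0 y z → BirkhoffEps γ 0 (x + y) z

lemma epsDirDeriv_zero_nonneg {f : EuclideanSpace ℝ (Fin d) → ℝ} {x v : EuclideanSpace ℝ (Fin d)}
    (h : ∀ s : ℝ, 0 < s → f x ≤ f (x + s • v)) : 0 ≤ epsDirDeriv f 0 x v := by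
  refine le_csInf ⟨_, 1, one_pos, rfl⟩ ?_
  rintro _ ⟨s, hs, rfl⟩
  exact div_nonneg (by linarith [h s hs]) hs.le

namespace IsGauge

variable {γ : EuclideanSpace ℝ (Fin d) → ℝ}

lemma map_zero (hγ : IsGauge γ) : γ 0 = 0 := by
  have h := hγ.2.2.1 0 2 two_pos
  rw [smul_zero] at h
  linarith

lemma pos (hγ : IsGauge γ) {x : EuclideanSpace ℝ (Fin d)} (hx : x ≠ 0) : 0 < γ x :=
  (hγ.1 x).lt_of_ne fun h => hx (hγ.2.1 x h.symm)

lemma map_smul_of_nonneg (hγ : IsGauge γ) (x : EuclideanSpace ℝ (Fin d)) {l : ℝ} (hl : 0 ≤ l) :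
    γ (l • x) = l * γ x := by
  rcases hl.eq_or_lt with rfl | hl
  · simp [hγ.map_zero]
  · exact hγ.2.2.1 x l hl

lemma convexOn_line (hγ : IsGauge γ) (x v : EuclideanSpace ℝ (Fin d)) :
    ConvexOn ℝ univ fun s : ℝ => γ (x + s • v) := by
  refine ⟨convex_univ, fun s _ t _ a b ha hb hab => ?_⟩
  calc γ (x + (a • s + b • t) • v) = γ (a • (x + s • v) + b • (x + t • v)) := by
        congr 1
        linear_combination (norm := module) -hab • x
    _ ≤ γ (a • (x + s • v)) + γ (b • (x + t • v)) := hγ.2.2.2 _ _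
    _ = a • γ (x + s • v) + b • γ (x + t • v) := by
        rw [hγ.map_smul_of_nonneg _ ha, hγ.map_smul_of_nonneg _ hb, smul_eq_mul, smul_eq_mul]

lemma continuous_line (hγ : IsGauge γ) (x v : EuclideanSpace ℝ (Fin d)) :
    Continuous fun s : ℝ => γ (x + s • v) := by
  simpa using (hγ.convexOn_line x v).continuousOn_interior

lemma hasDerivWithinAt_epsDirDeriv (hγ : IsGauge γ) (x v : EuclideanSpace ℝ (Fin d)) :
    HasDerivWithinAt (fun s : ℝ => γ (x + s • v)) (epsDirDeriv γ 0 x v) (Ioi 0) 0 := by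
  have h := (hγ.convexOn_line x v).hasDerivWithinAt_sInf_slope_of_mem_interior
    (x := 0) (by simp)
  convert h using 1
  unfold epsDirDeriv
  congr 1
  ext q
  simp [slope_def_field, eq_comm]

lemma epsDirDeriv_eq_of_hasDerivWithinAt (hγ : IsGauge γ) {x v : EuclideanSpace ℝ (Fin d)}
    {D : ℝ} (h : HasDerivWithinAt (fun s : ℝ => γ (x + s • v)) D (Ioi 0) 0) :
    epsDirDeriv γ 0 x v = D :=
  (uniqueDiffWithinAt_Ioi 0).eq_deriv _ (hγ.hasDerivWithinAt_epsDirDeriv x v) h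

lemma hasDerivWithinAt_line (hγ : IsGauge γ) (x v : EuclideanSpace ℝ (Fin d)) (t : ℝ) :
    HasDerivWithinAt (fun s : ℝ => γ (x + s • v)) (epsDirDeriv γ 0 (x + t • v) v) (Ici t) t := by
  have h := (hγ.hasDerivWithinAt_epsDirDeriv (x + t • v) v).comp_of_eq t
    ((hasDerivAt_id' t).sub_const t).hasDerivWithinAt
    (fun s (hs : t < s) => sub_pos.mpr hs) (sub_self t).symm
  have hline : (fun s : ℝ => γ (x + s • v)) = (fun s => γ (x + t • v + s • v)) ∘ (· - t) := by
    funext s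
    simp only [Function.comp_apply, add_assoc, ← add_smul, add_sub_cancel]
  rw [hline]
  simpa using h.Ici_of_Ioi

lemma add_mul_epsDirDeriv_le (hγ : IsGauge γ) (x v : EuclideanSpace ℝ (Fin d)) {s : ℝ}
    (hs : 0 ≤ s) : γ x + s * epsDirDeriv γ 0 x v ≤ γ (x + s • v) := by
  rcases hs.eq_or_lt with rfl | hs
  · simp
  have h := (hγ.convexOn_line x v).le_slope_of_hasDerivWithinAt_Ioi (mem_univ 0) (mem_univ s) hs
    (hγ.hasDerivWithinAt_epsDirDeriv x v)
  rw [slope_def_field, le_div_iff₀ (by simpa using hs)] at h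
  simp only [zero_smul, add_zero, sub_zero] at h
  linarith

lemma epsDirDeriv_add_epsDirDeriv_neg_nonneg (hγ : IsGauge γ) (x v : EuclideanSpace ℝ (Fin d)) :
    0 ≤ epsDirDeriv γ 0 x v + epsDirDeriv γ 0 x (-v) := by
  set f : ℝ → ℝ := fun s => γ (x + s • v)
  have hright : epsDirDeriv γ 0 x v = derivWithin f (Ioi 0) 0 :=
    hγ.epsDirDeriv_eq_of_hasDerivWithinAt
      ((hγ.convexOn_line x v).hasDerivWithinAt_rightDeriv_of_mem_interior (by simp))
  have hleft : epsDirDeriv γ 0 x (-v) = -derivWithin f (Iio 0) 0 := by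
    have hneg : (fun s : ℝ => γ (x + s • -v)) = fun s => f (-s) := by
      funext s
      simp [f]
    rw [← (hγ.hasDerivWithinAt_epsDirDeriv x (-v)).derivWithin (uniqueDiffWithinAt_Ioi 0), hneg,
      derivWithin_comp_neg, neg_Ioi, neg_zero]
  have := (hγ.convexOn_line x v).leftDeriv_le_rightDeriv_of_mem_interior (x := 0) (by simp)
  linarith

/-- Near `s = 0`, homogeneity gives `γ (x + s • (v + c • x)) = (1 + s * c) * γ (x + m s • v)`
with `m s = s / (1 + s * c)`; differentiate the right-hand side. -/
lemma epsDirDeriv_add_smul_self (hγ : IsGauge γ) (x v : EuclideanSpace ℝ (Fin d)) (c : ℝ) :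
    epsDirDeriv γ 0 x (v + c • x) = epsDirDeriv γ 0 x v + c * γ x := by
  set U : Set ℝ := {s | 0 < 1 + s * c}
  have hU : U ∈ 𝓝 0 := (isOpen_lt continuous_const (by fun_prop)).mem_nhds (by simp)
  have hscale : HasDerivAt (fun s : ℝ => 1 + s * c) c 0 := by
    simpa using ((hasDerivAt_id (0 : ℝ)).mul_const c).const_add 1
  have hm : HasDerivAt (fun s : ℝ => s / (1 + s * c)) 1 0 := by
    simpa using (hasDerivAt_id' (0 : ℝ)).fun_div hscale (by simp)
  have hmaps : MapsTo (fun s : ℝ => s / (1 + s * c)) (Ioi 0 ∩ U) (Ioi 0) :=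
    fun s hs => show 0 < s / (1 + s * c) from div_pos hs.1 hs.2
  have hprod := hscale.hasDerivWithinAt.fun_mul
    ((hγ.hasDerivWithinAt_epsDirDeriv x v).comp_of_eq 0 hm.hasDerivWithinAt hmaps (by simp))
  refine hγ.epsDirDeriv_eq_of_hasDerivWithinAt ((hasDerivWithinAt_inter hU).mp ?_)
  refine (hprod.congr (fun s hs => ?_) (by simp)).congr_deriv ?_
  · have hpos : 0 < 1 + s * c := hs.2
    rw [Function.comp_apply, ← hγ.map_smul_of_nonneg _ hpos.le]
    congr 1
    rw [smul_add (1 + s * c), smul_smul, mul_div_cancel₀ _ hpos.ne']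
    module
  · simp only [Function.comp_apply, zero_mul, add_zero, div_one, zero_smul, mul_one, one_mul]
    ring

lemma birkhoffEps_zero_iff (hγ : IsGauge γ) {x z : EuclideanSpace ℝ (Fin d)} :
    BirkhoffEps γ 0 x z ↔ 0 ≤ epsDirDeriv γ 0 x z ∧ 0 ≤ epsDirDeriv γ 0 x (-z) := by
  simp only [BirkhoffEps, add_zero]
  constructor
  · intro h
    refine ⟨epsDirDeriv_zero_nonneg fun s _ => h s, epsDirDeriv_zero_nonneg fun s _ => ?_⟩
    simpa using h (-s)
  · rintro ⟨hz, hnz⟩ l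
    rcases le_total 0 l with hl | hl
    · nlinarith [hγ.add_mul_epsDirDeriv_le x z hl]
    · have h := hγ.add_mul_epsDirDeriv_le x (-z) (neg_nonneg.mpr hl)
      rw [neg_smul_neg] at h
      nlinarith

lemma exists_birkhoffEps_zero_add_smul (hγ : IsGauge γ) (x : EuclideanSpace ℝ (Fin d))
    {z : EuclideanSpace ℝ (Fin d)} (hz : z ≠ 0) : ∃ t : ℝ, BirkhoffEps γ 0 (x + t • z) z := by
  set c := min (γ z) (γ (-z))
  have hc : 0 < c := lt_min (hγ.pos hz) (hγ.pos (neg_ne_zero.mpr hz))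
  have hlower : ∀ s : ℝ, ‖s‖ * c - γ (-x) ≤ γ (x + s • z) := by
    intro s
    have hsub : γ (s • z) ≤ γ (x + s • z) + γ (-x) := by
      simpa using hγ.2.2.2 (x + s • z) (-x)
    have hscale : ‖s‖ * c ≤ γ (s • z) := by
      rcases le_total 0 s with hs | hs
      · rw [hγ.map_smul_of_nonneg z hs, Real.norm_of_nonneg hs]
        exact mul_le_mul_of_nonneg_left (min_le_left _ _) hs
      · rw [← neg_smul_neg, hγ.map_smul_of_nonneg (-z) (neg_nonneg.mpr hs),
          Real.norm_of_nonpos hs]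
        exact mul_le_mul_of_nonneg_left (min_le_right _ _) (neg_nonneg.mpr hs)
    linarith
  have hcoercive : Tendsto (fun s : ℝ => γ (x + s • z)) (cocompact ℝ) atTop :=
    tendsto_atTop_mono hlower <| tendsto_atTop_add_const_right _ _ <|
      tendsto_norm_cocompact_atTop.atTop_mul_const hc
  obtain ⟨t, ht⟩ := (hγ.continuous_line x z).exists_forall_le hcoercive
  refine ⟨t, fun l => ?_⟩
  simpa [add_assoc, ← add_smul] using ht (t + l)

lemma eq_zero_of_birkhoffEps_zero_smul_self (hγ : IsGauge γ) {z : EuclideanSpace ℝ (Fin d)}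
    (hz : z ≠ 0) {t : ℝ} (h : BirkhoffEps γ 0 (t • z) z) : t = 0 := by
  have h0 := h (-t)
  rw [← add_smul, add_neg_cancel, zero_smul, hγ.map_zero, add_zero] at h0
  exact (smul_eq_zero.mp (hγ.2.1 _ (le_antisymm h0 (hγ.1 _)))).resolve_right hz

lemma birkhoffEps_zero_neg (hγ : IsGauge γ) (hadd : BirkhoffLeftAdditive γ)
    {x z : EuclideanSpace ℝ (Fin d)} (hz : z ≠ 0) (h : BirkhoffEps γ 0 x z) :
    BirkhoffEps γ 0 (-x) z := by
  obtain ⟨t, ht⟩ := hγ.exists_birkhoffEps_zero_add_smul (-x) hz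
  have hsum := hadd x _ z h ht
  rw [add_neg_cancel_left] at hsum
  obtain rfl := hγ.eq_zero_of_birkhoffEps_zero_smul_self hz hsum
  simpa using ht

lemma neg_mul_epsDirDeriv_le (hγ : IsGauge γ) (hadd : BirkhoffLeftAdditive γ)
    {u w : EuclideanSpace ℝ (Fin d)} (huw : LinearIndependent ℝ ![u, w]) :
    γ (-u) * epsDirDeriv γ 0 u w ≤ γ u * epsDirDeriv γ 0 (-u) (-w) := by
  have hu : 0 < γ u := hγ.pos (by simpa using huw.ne_zero 0)
  -- `a` is chosen so that `D(u; w + a • u) = 0`, which makes `u ⊥ w + a • u`.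
  set a := -epsDirDeriv γ 0 u w / γ u
  have ha : a * γ u = -epsDirDeriv γ 0 u w := div_mul_cancel₀ _ hu.ne'
  have hz : w + a • u ≠ 0 := by
    have : LinearIndependent ℝ ![u, a • u + w] := by simpa using huw
    simpa [add_comm] using this.ne_zero 1
  have horth : BirkhoffEps γ 0 u (w + a • u) := by
    refine hγ.birkhoffEps_zero_iff.mpr ⟨?_, ?_⟩
    · rw [hγ.epsDirDeriv_add_smul_self, ha, add_neg_cancel]
    · rw [neg_add, ← neg_smul, hγ.epsDirDeriv_add_smul_self, neg_mul, ha, neg_neg, add_comm]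
      exact hγ.epsDirDeriv_add_epsDirDeriv_neg_nonneg u w
  have hneg := (hγ.birkhoffEps_zero_iff.mp (hγ.birkhoffEps_zero_neg hadd hz horth)).2
  rw [neg_add, ← smul_neg, hγ.epsDirDeriv_add_smul_self] at hneg
  linear_combination mul_nonneg hu.le hneg + γ (-u) * ha

lemma neg_mul_epsDirDeriv_eq (hγ : IsGauge γ) (hadd : BirkhoffLeftAdditive γ)
    {u w : EuclideanSpace ℝ (Fin d)} (huw : LinearIndependent ℝ ![u, w]) :
    γ (-u) * epsDirDeriv γ 0 u w = γ u * epsDirDeriv γ 0 (-u) (-w) := by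
  have h := hγ.neg_mul_epsDirDeriv_le hadd (u := -u) (w := -w) (by simpa using huw)
  rw [neg_neg, neg_neg] at h
  exact le_antisymm (hγ.neg_mul_epsDirDeriv_le hadd huw) h

lemma mul_neg_eq_of_linearIndependent (hγ : IsGauge γ) (hadd : BirkhoffLeftAdditive γ)
    {x w : EuclideanSpace ℝ (Fin d)} (hxw : LinearIndependent ℝ ![x, w]) :
    γ x * γ (-w) = γ w * γ (-x) := by
  set v := w - x
  have hind : ∀ t : ℝ, LinearIndependent ℝ ![x + t • v, v] := by
    have hxv := (LinearIndependent.pair_add_smul_right_iff (c := (-1 : ℝ))).mpr hxw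
    rw [neg_one_smul, neg_add_eq_sub] at hxv
    exact fun t => (LinearIndependent.pair_add_smul_left_iff (b := t)).mpr hxv
  have hneg : ∀ t : ℝ, -x + t • -v = -(x + t • v) := fun t => by module
  have hQ : ∀ t : ℝ, γ (-x + t • -v) ≠ 0 := fun t => by
    rw [hneg]
    exact (hγ.pos (neg_ne_zero.mpr ((hind t).ne_zero 0))).ne'
  set R := fun t : ℝ => γ (x + t • v) / γ (-x + t • -v)
  have hcont : ContinuousOn R (Icc 0 1) :=
    ((hγ.continuous_line x v).div (hγ.continuous_line (-x) (-v)) hQ).continuousOn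
  have hderiv : ∀ t ∈ Ico (0 : ℝ) 1, HasDerivWithinAt R 0 (Ici t) t := by
    intro t _
    refine ((hγ.hasDerivWithinAt_line x v t).div (hγ.hasDerivWithinAt_line (-x) (-v) t)
      (hQ t)).congr_deriv ?_
    rw [hneg, mul_comm, hγ.neg_mul_epsDirDeriv_eq hadd (hind t), sub_self, zero_div]
  have hR := constant_of_has_deriv_right_zero hcont hderiv 1 ⟨zero_le_one, le_rfl⟩
  simp only [R, hneg, v, one_smul, zero_smul, add_zero, add_sub_cancel] at hR
  rw [div_eq_div_iff (hγ.pos (by simpa using hxw.ne_zero 1)).ne'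
    (hγ.pos (by simpa using hxw.ne_zero 0)).ne'] at hR
  linarith

end IsGauge

theorem left_additive_implies_norm (hd : 2 ≤ d)
    (γ : EuclideanSpace ℝ (Fin d) → ℝ) (hγ : IsGauge γ)
    (h : ∀ x y z : EuclideanSpace ℝ (Fin d),
      BirkhoffEps γ 0 x z → BirkhoffEps γ 0 y z → BirkhoffEps γ 0 (x + y) z) :
    ∀ x, γ (-x) = γ x := by
  intro x
  rcases eq_or_ne x 0 with rfl | hx
  · rw [neg_zero]
  obtain ⟨w, hxw⟩ := exists_linearIndependent_pair_of_one_lt_finrank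
    (by rwa [finrank_euclideanSpace_fin]) hx
  have hwx : LinearIndependent ℝ ![w, -x] := by
    rwa [LinearIndependent.pair_neg_right_iff, LinearIndependent.pair_symm_iff]
  have r₁ := hγ.mul_neg_eq_of_linearIndependent h hxw
  have r₂ := hγ.mul_neg_eq_of_linearIndependent h hwx
  rw [neg_neg] at r₂
  have hw : 0 < γ w * γ (-w) :=
    mul_pos (hγ.pos (by simpa using hxw.ne_zero 1)) (hγ.pos (by simpa using hxw.ne_zero 1))
  have hsq : γ (-x) ^ 2 * (γ w * γ (-w)) = γ x ^ 2 * (γ w * γ (-w)) := by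
    linear_combination (-(γ x * γ w)) * r₁ - (γ (-x) * γ w) * r₂
  exact (sq_eq_sq₀ (hγ.1 _) (hγ.1 _)).mp (mul_right_cancel₀ hw.ne' hsq)
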